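/- arXiv:2603.28230 — 4 statements merged into one kernel-verified Lean document; each statement's English description precedes it below -/
import Mathlib

section
/- Let R = F_2[x^{±1}, y^{±1}] be the Laurent polynomial ring over the field with two elements. For any monomial u = x^a y^b with integers a, b, there do not exist p, q ∈ R satisfying p = y·p̄, q = x·q̄ (where bar denotes the antipode map x ↦ x^{-1}, y ↦ y^{-1}) and (1+x)·p + (1+y)·q = u + x·y·u^{-1}. -/
/-!
Reducing exponents mod 2 maps `R` to `F₂[(ℤ/2)²]`, where every monomial squares to `1` and
the antipode becomes the identity. There `q = x q̄` says `(1 + x) q = 0`, and `(1 + x)² = 0`,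
so multiplying the equation by `u (1 + x)` kills its left side and leaves
`(1 + x)(1 + x y) = (1 + x)(1 + y) = 0`, which is false: its coefficient at `1` is `1`.
-/

open AddMonoidAlgebra

/-- The Laurent polynomial ring `R = F₂[x^{±1}, y^{±1}]`, realized as the group algebra
of `ℤ × ℤ` over `F₂`; the monomial `x^a y^b` corresponds to `single (a, b) 1`. -/
abbrev R2 : Type := AddMonoidAlgebra (ZMod 2) (ℤ × ℤ)

noncomputable def mono (a b : ℤ) : R2 := AddMonoidAlgebra.single (a, b) 1

/-- The antipode map `x ↦ x⁻¹`, `y ↦ y⁻¹`, the `F₂`-algebra involution induced by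
negation on the exponent group `ℤ × ℤ`. -/
noncomputable def bar (f : R2) : R2 :=
  AddMonoidAlgebra.domCongr (ZMod 2) (ZMod 2) (AddEquiv.neg (ℤ × ℤ)) f

theorem one_add_mul_one_add_eq_zero_of_key_equation {S : Type*} [CommRing S] [CharP S 2]
    {X Y U P Q : S} (hX : X * X = 1) (hU : U * U = 1) (hQ : Q = X * Q)
    (h : (1 + X) * P + (1 + Y) * Q = U + X * Y * U) : (1 + X) * (1 + Y) = 0 := by
  have two : (2 : S) = 0 := CharTwo.two_eq_zero
  have hXX : (1 + X) * (1 + X) = 0 := by linear_combination hX + (1 + X) * two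
  have hXQ : (1 + X) * Q = 0 := by linear_combination -hQ + Q * two
  -- `h` multiplied by `U * (1 + X)`
  linear_combination (-(U * (1 + X))) * h + U * P * hXX + U * (1 + Y) * hXQ
    - (1 + X) * (1 + X * Y) * hU - Y * hX

lemma mono_mul_mono (a b c d : ℤ) : mono a b * mono c d = mono (a + c) (b + d) := by
  simp [mono, single_mul_single]

lemma mono_zero_zero : mono 0 0 = 1 := rfl

lemma bar_mono (a b : ℤ) : bar (mono a b) = mono (-a) (-b) := by
  simp [bar, mono]

noncomputable def parityHom : R2 →+* AddMonoidAlgebra (ZMod 2) (ZMod 2 × ZMod 2) :=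
  mapDomainRingHom (ZMod 2) ((Int.castAddHom (ZMod 2)).prodMap (Int.castAddHom (ZMod 2)))

instance : CharP (AddMonoidAlgebra (ZMod 2) (ZMod 2 × ZMod 2)) 2 :=
  charP_of_injective_algebraMap' (ZMod 2) 2

lemma parityHom_mono (a b : ℤ) :
    parityHom (mono a b) = single ((a : ZMod 2), (b : ZMod 2)) 1 := by
  simp [parityHom, mono]

lemma parityHom_bar (f : R2) : parityHom (bar f) = parityHom f := by
  show (parityHom.comp (domCongr (ZMod 2) (ZMod 2) (AddEquiv.neg (ℤ × ℤ))).toRingHom) f =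
    parityHom f
  congr 1
  refine ringHom_ext (fun r => ?_) (fun v => ?_)
  · simp
  · obtain ⟨i, j⟩ := v
    simp [parityHom, ZMod.neg_eq_self_mod_two]

lemma parityHom_mono_mul_self (a b : ℤ) :
    parityHom (mono a b) * parityHom (mono a b) = 1 := by
  calc parityHom (mono a b) * parityHom (mono a b)
      = parityHom (mono a b) * parityHom (bar (mono a b)) := by rw [parityHom_bar]
    _ = 1 := by
      rw [← map_mul, bar_mono, mono_mul_mono, add_neg_cancel, add_neg_cancel, mono_zero_zero,
        map_one]

lemma parityHom_one_add_mul_one_add_ne_zero :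
    (1 + parityHom (mono 1 0)) * (1 + parityHom (mono 0 1)) ≠ 0 := by
  intro h
  have h0 := congrArg (fun f => f.coeff 0) h
  simp [parityHom_mono, add_mul, mul_add, single_mul_single, one_def, coeff_single] at h0

/-- For any monomial `u = x^a y^b`, there exist no `p, q ∈ R` with `p = y·p̄`, `q = x·q̄`
and `(1+x)·p + (1+y)·q = u + x·y·u⁻¹`. -/
theorem no_solution_key_equation (a b : ℤ) :
    ¬ ∃ p q : R2,
      p = mono 0 1 * bar p ∧
      q = mono 1 0 * bar q ∧
      (1 + mono 1 0) * p + (1 + mono 0 1) * q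
        = mono a b + mono 1 0 * mono 0 1 * mono (-a) (-b) := by
  rintro ⟨p, q, -, hq, hE⟩
  apply parityHom_one_add_mul_one_add_ne_zero
  refine one_add_mul_one_add_eq_zero_of_key_equation (P := parityHom p) (Q := parityHom q)
    (parityHom_mono_mul_self 1 0) (parityHom_mono_mul_self a b) ?_ ?_
  · simpa only [map_mul, parityHom_bar] using congrArg parityHom hq
  · rw [← bar_mono] at hE
    simpa only [map_add, map_mul, map_one, parityHom_bar] using congrArg parityHom hE
end

section
/- Let R = F_2[x^{±1}, y^{±1}]. Every f ∈ R satisfying x·y·f̄ = f (bar denoting the antipode x ↦ x^{-1}, y ↦ y^{-1}) is a finite F_2-linear combination of the elements E_{m,n} = x^m y^n + x^{1-m} y^{1-n}. -/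
open AddMonoidAlgebra

/-- `E_{m,n} = x^m y^n + x^{1-m} y^{1-n}`. -/
noncomputable def Emn (m n : ℤ) : R2 := mono m n + mono (1 - m) (1 - n)

/-! The condition `x y f̄ = f` says that the coefficients of `f` are invariant under the
involution `σ (m, n) = (1 - m, 1 - n)` of `ℤ²`. The half-plane `m > 0` meets every `σ`-orbit in
exactly one point, so if `g` is the part of `f` supported there, then `f = g + σ_* g`; and
`g ↦ g + σ_* g` is additive and sends `x^m y^n` to `E_{m,n}`. -/

namespace AddMonoidAlgebra

open Submodule Function

variable {k G : Type*} [Semiring k] {σ : G → G}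

theorem add_mapDomain_mem_span (g : AddMonoidAlgebra k G) :
    g + mapDomain σ g ∈ span k (Set.range fun p => single p (1 : k) + single (σ p) 1) := by
  induction g using AddMonoidAlgebra.induction_linear with
  | zero => simp
  | add x y hx hy =>
    rw [mapDomain_add, add_add_add_comm]
    exact add_mem hx hy
  | single p c =>
    rw [mapDomain_single, ← mul_one c, ← smul_single', ← smul_single', ← smul_add]
    exact smul_mem _ _ (subset_span ⟨p, rfl⟩)

theorem mem_span_single_add_single_of_coeff_comp_eq (hσ : Involutive σ) {H : Set G}
    (hH : ∀ p, p ∈ H ↔ σ p ∉ H) {f : AddMonoidAlgebra k G}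
    (hf : ∀ p, f.coeff (σ p) = f.coeff p) :
    f ∈ span k (Set.range fun p => single p (1 : k) + single (σ p) 1) := by
  classical
  set g : AddMonoidAlgebra k G := ofCoeff (f.coeff.filter (· ∈ H))
  suffices f = g + mapDomain σ g from this ▸ add_mapDomain_mem_span g
  ext q
  conv_rhs => rw [← hσ q]
  rw [coeff_add, coeff_mapDomain, Finsupp.add_apply, Finsupp.mapDomain_apply hσ.injective, hσ q]
  by_cases hq : q ∈ H
  · simp [g, hq, (hH q).1 hq]
  · simp [g, hq, (hH q).not_left.1 hq, hf]

end AddMonoidAlgebra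

lemma coeff_mono_mul (a b : ℤ) (f : R2) (p : ℤ × ℤ) :
    (mono a b * f).coeff p = f.coeff (p - (a, b)) := by
  simp [mono, sub_eq_neg_add]

lemma coeff_bar (f : R2) (p : ℤ × ℤ) : (bar f).coeff p = f.coeff (-p) := by
  simp [bar]

/-- Every `f` with `x·y·f̄ = f` is a finite `F₂`-linear combination of the `E_{m,n}`. -/
theorem fixed_by_xy_antipode_mem_span (f : R2)
    (hf : mono 1 0 * mono 0 1 * bar f = f) :
    f ∈ Submodule.span (ZMod 2) (Set.range fun mn : ℤ × ℤ => Emn mn.1 mn.2) := by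
  set σ : ℤ × ℤ → ℤ × ℤ := fun p => (1 - p.1, 1 - p.2)
  have hσ : Function.Involutive σ := fun p => by simp [σ]
  have hsym (p : ℤ × ℤ) : f.coeff (σ p) = f.coeff p := by
    conv_rhs => rw [← hf, mono_mul_mono, coeff_mono_mul, coeff_bar]
    congr 1
    ext <;> simp [σ]
  have hH (p : ℤ × ℤ) : p ∈ {p : ℤ × ℤ | 0 < p.1} ↔ σ p ∉ {p : ℤ × ℤ | 0 < p.1} :=
    show 0 < p.1 ↔ ¬0 < 1 - p.1 by omega
  exact mem_span_single_add_single_of_coeff_comp_eq hσ hH hsym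
end

section
/- Let R = F_2[x^{±1}, y^{±1}] with antipode f ↦ f̄, let u = x^a y^b be a monomial, and suppose C = [[C_{11}, C_{12}],[C_{21}, C_{22}]] is a 2×2 matrix over R satisfying C·d = d̃·u^{-1}, where d = (1+x^{-1}, 1+y^{-1})^T and d̃ = (1+y, 1+x)^T. Then there exist p', q' ∈ R such that C_{11} = p'(1+y^{-1}), C_{12} = y·u^{-1} + p'(1+x^{-1}), C_{21} = u^{-1}x + q'(1+y^{-1}), C_{22} = q'(1+x^{-1}). -/
open AddMonoidAlgebra

/-- The column vector `d = (1+x⁻¹, 1+y⁻¹)ᵀ`. -/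
noncomputable def dcol : Matrix (Fin 2) (Fin 1) R2 :=
  !![1 + mono (-1) 0;
     1 + mono 0 (-1)]

/-- The column vector `d̃ = (1+y, 1+x)ᵀ`. -/
noncomputable def dtcol : Matrix (Fin 2) (Fin 1) R2 :=
  !![1 + mono 0 1;
     1 + mono 1 0]

/-!
Moving the particular solution across (we are in characteristic 2), each row of
`C·d = d̃·u⁻¹` becomes a relation `f·(1+x⁻¹) = g·(1+y⁻¹)`. Substituting `y = 1` kills the
right-hand side, and `1+x⁻¹` is not a zero divisor, so `f` vanishes at `y = 1`. As `f` minus its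
value at `y = 1` is divisible by `1+y⁻¹` (because every `y^j - 1` is), `f = p·(1+y⁻¹)`, and
cancelling `1+y⁻¹` gives `g = p·(1+x⁻¹)`.
-/

section LaurentDivisibility

variable {k G H : Type*} [CommRing k] [AddCommGroup G] [AddCommGroup H]

theorem single_sub_one_dvd_single_zsmul_sub_one (g : G) (n : ℤ) :
    (single g 1 - 1 : k[G]) ∣ single (n • g) 1 - 1 := by
  induction n using Int.induction_on with
  | zero => simp [one_def]
  | succ n ih =>
    obtain ⟨c, hc⟩ := ih
    have e : (single (((n : ℤ) + 1) • g) 1 : k[G]) =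
        single g 1 * single ((n : ℤ) • g) 1 := by
      rw [single_mul_single, one_mul, add_smul, one_smul, add_comm]
    exact ⟨single g 1 * c + 1, by linear_combination e + single g 1 * hc⟩
  | pred n ih =>
    obtain ⟨c, hc⟩ := ih
    have e : (single ((-(n : ℤ) - 1) • g) 1 : k[G]) =
        single (-g) 1 * single (-(n : ℤ) • g) 1 := by
      rw [single_mul_single, one_mul, sub_smul, one_smul, sub_eq_add_neg, add_comm]
    have e' : (single (-g) 1 * single g 1 : k[G]) = 1 := by
      rw [single_mul_single, neg_add_cancel, one_mul, one_def]
    exact ⟨single (-g) 1 * c - single (-g) 1, by linear_combination e + single (-g) 1 * hc + e'⟩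

variable (k G H) in
noncomputable def collapseSnd : k[G × H] →+* k[G × H] :=
  mapDomainRingHom k ((AddMonoidHom.inl G H).comp (AddMonoidHom.fst G H))

@[simp]
theorem collapseSnd_single (a : G) (b : H) (r : k) :
    collapseSnd k G H (single (a, b) r) = single (a, 0) r := by
  simp [collapseSnd]

theorem single_sub_one_dvd_sub_collapseSnd {h : H}
    (hh : AddSubgroup.zmultiples h = ⊤) (f : k[G × H]) :
    (single (0, h) 1 - 1 : k[G × H]) ∣ f - collapseSnd k G H f := by
  induction f using AddMonoidAlgebra.induction_linear with
  | zero => simp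
  | add f₁ f₂ h₁ h₂ => rw [map_add, add_sub_add_comm]; exact dvd_add h₁ h₂
  | single ab r =>
    obtain ⟨a, b⟩ := ab
    obtain ⟨n, rfl⟩ := AddSubgroup.mem_zmultiples_iff.mp (hh ▸ AddSubgroup.mem_top b)
    have : single (a, n • h) r - single (a, 0) r =
        single (a, 0) r * (single (n • ((0 : G), h)) 1 - 1 : k[G × H]) := by
      rw [mul_sub, single_mul_single, mul_one, mul_one]; simp
    rw [collapseSnd_single, this]
    exact dvd_mul_of_dvd_right (single_sub_one_dvd_single_zsmul_sub_one _ n) _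

theorem single_sub_one_ne_zero [Nontrivial k] {a : G} (ha : a ≠ 0) :
    (single a 1 - 1 : k[G]) ≠ 0 :=
  sub_ne_zero.mpr fun h ↦ ha (single_left_injective one_ne_zero (h.trans one_def))

end LaurentDivisibility

theorem exists_eq_mul_of_mul_single_sub_one_eq {k : Type*} [CommRing k] [IsDomain k]
    {f g : k[ℤ × ℤ]} (h : f * (single (-1, 0) 1 - 1) = g * (single (0, -1) 1 - 1)) :
    ∃ p, f = p * (single (0, -1) 1 - 1) ∧ g = p * (single (-1, 0) 1 - 1) := by
  have hx : (single ((-1 : ℤ), (0 : ℤ)) 1 - 1 : k[ℤ × ℤ]) ≠ 0 :=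
    single_sub_one_ne_zero (by simp)
  have hy : (single ((0 : ℤ), (-1 : ℤ)) 1 - 1 : k[ℤ × ℤ]) ≠ 0 :=
    single_sub_one_ne_zero (by simp)
  have hf : collapseSnd k ℤ ℤ f = 0 := by
    have := congrArg (collapseSnd k ℤ ℤ) h
    rw [map_mul, map_mul, map_sub, map_sub, map_one, collapseSnd_single, collapseSnd_single,
      Prod.mk_zero_zero, ← one_def, sub_self, mul_zero] at this
    exact (mul_eq_zero.mp this).resolve_right hx
  have hgen : AddSubgroup.zmultiples (-1 : ℤ) = ⊤ := by simp
  obtain ⟨p, hp⟩ := single_sub_one_dvd_sub_collapseSnd hgen f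
  rw [hf, sub_zero, mul_comm] at hp
  refine ⟨p, hp, mul_right_cancel₀ hy ?_⟩
  rw [← h, hp]
  ring

instance : CharP R2 2 := charP_of_injective_algebraMap' (ZMod 2) 2

theorem one_add_mono_eq_single_sub_one (a b : ℤ) : 1 + mono a b = single (a, b) 1 - 1 := by
  rw [CharTwo.sub_eq_add, add_comm]
  rfl

theorem mono_mul_one_add_mono_neg (a b : ℤ) : mono a b * (1 + mono (-a) (-b)) = 1 + mono a b := by
  rw [mul_add, mul_one, mono, mono, single_mul_single, mul_one, Prod.mk_add_mk, add_neg_cancel,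
    add_neg_cancel, Prod.mk_zero_zero, ← one_def, add_comm]

theorem exists_eq_mul_of_mul_one_add_mono_eq {f g : R2}
    (h : f * (1 + mono (-1) 0) = g * (1 + mono 0 (-1))) :
    ∃ p, f = p * (1 + mono 0 (-1)) ∧ g = p * (1 + mono (-1) 0) := by
  simp only [one_add_mono_eq_single_sub_one] at h ⊢
  exact exists_eq_mul_of_mul_single_sub_one_eq h

/-- Any solution `C` of `C·d = d̃·u⁻¹` (with `u = x^a y^b`) is the particular solution
`C₀ = [[0, y u⁻¹],[u⁻¹ x, 0]]` plus a multiple of the syzygy `(1+y⁻¹, 1+x⁻¹)`. -/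
theorem general_solution_Cd (a b : ℤ) (C : Matrix (Fin 2) (Fin 2) R2)
    (hC : C * dcol = mono (-a) (-b) • dtcol) :
    ∃ p' q' : R2,
      C 0 0 = p' * (1 + mono 0 (-1)) ∧
      C 0 1 = mono 0 1 * mono (-a) (-b) + p' * (1 + mono (-1) 0) ∧
      C 1 0 = mono (-a) (-b) * mono 1 0 + q' * (1 + mono 0 (-1)) ∧
      C 1 1 = q' * (1 + mono (-1) 0) := by
  have row₀ := congrFun (congrFun hC 0) 0
  have row₁ := congrFun (congrFun hC 1) 0
  simp only [Matrix.mul_apply, Fin.sum_univ_two, dcol, dtcol, Matrix.of_apply, Matrix.cons_val',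
    Matrix.cons_val_fin_one, Matrix.cons_val_zero, Matrix.cons_val_one, Matrix.smul_apply,
    smul_eq_mul] at row₀ row₁
  have two : (2 : R2) = 0 := CharTwo.two_eq_zero
  have hy : mono 0 1 * (1 + mono 0 (-1)) = 1 + mono 0 1 := by
    simpa only [neg_zero] using mono_mul_one_add_mono_neg 0 1
  have hx : mono 1 0 * (1 + mono (-1) 0) = 1 + mono 1 0 := by
    simpa only [neg_zero] using mono_mul_one_add_mono_neg 1 0
  obtain ⟨p, hp₀, hp₁⟩ := exists_eq_mul_of_mul_one_add_mono_eq
    (f := C 0 0) (g := C 0 1 + mono 0 1 * mono (-a) (-b)) <| by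
      linear_combination row₀ - mono (-a) (-b) * hy - C 0 1 * (1 + mono 0 (-1)) * two
  obtain ⟨q, hq₀, hq₁⟩ := exists_eq_mul_of_mul_one_add_mono_eq
    (f := C 1 0 + mono (-a) (-b) * mono 1 0) (g := C 1 1) <| by
      linear_combination row₁ + mono (-a) (-b) * hx +
        (mono (-a) (-b) * (1 + mono 1 0) - C 1 1 * (1 + mono 0 (-1))) * two
  refine ⟨p, q, hp₀, ?_, ?_, hq₁⟩
  · linear_combination hp₁ - mono 0 1 * mono (-a) (-b) * two
  · linear_combination hq₀ - mono (-a) (-b) * mono 1 0 * two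
end

section
/- Let R = F_2[x^{±1}, y^{±1}] with antipode f ↦ f̄ (x ↦ x^{-1}, y ↦ y^{-1}), and let u = x^a y^b be any monomial. There is no 2×2 matrix C over R such that C = C† (antipode-transpose) and C·d = d̃·u^{-1}, where d = (1+x^{-1}, 1+y^{-1})^T and d̃ = (1+y, 1+x)^T. -/
open AddMonoidAlgebra

/-- Antipode-transpose (`†`) of a matrix over `R2`. -/
noncomputable def dag {α β : Type*} (M : Matrix α β R2) : Matrix β α R2 :=
  (M.map bar).transpose

/-!
Pair `f ∈ F₂[ℤ²]` with a weight `w : ℤ² → F₂` by `⟨w, f⟩ = ∑ᵥ f(v) w(v)`. Multiplying `f` by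
`x^u` translates the weight and applying the antipode reflects it, so every scalar equation in
`C·d = d̃·u⁻¹` and `C = C†` becomes a relation between pairings of the entries of `C`. The test
weights are `v₁v₂` and the triangular numbers `T(v₁)`, `T(v₂)` with `T(n) = n(n+1)/2`, whose
discrete derivatives mod 2 are the coordinates. The second row of `C·d = d̃·u⁻¹` gives
`⟨v₁, C₁₀⟩ = 1 + a`; hermiticity gives `⟨v₁, C₀₁⟩ = ⟨v₁, C₁₀⟩` and `⟨v₂, C₀₀⟩ = 0`
(as `T(-n) = T(n) - n`); and the first row gives `⟨v₂, C₀₀⟩ + ⟨v₁, C₀₁⟩ = a`, so `1 + a = a`.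
-/

namespace AddMonoidAlgebra

variable {k G : Type*} [CommSemiring k]

noncomputable def coeffPairing (w : G → k) : k[G] →ₗ[k] k :=
  Finsupp.linearCombination k w ∘ₗ (coeffLinearEquiv k).toLinearMap

@[simp]
lemma coeffPairing_single (w : G → k) (v : G) (c : k) :
    coeffPairing w (single v c) = c * w v :=
  Finsupp.linearCombination_single k c v

@[simp]
lemma coeffPairing_zero (f : k[G]) : coeffPairing (fun _ : G => (0 : k)) f = 0 := by
  simp [coeffPairing, Finsupp.linearCombination_apply]

lemma coeffPairing_add_weight (w₁ w₂ : G → k) (f : k[G]) :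
    coeffPairing (fun v => w₁ v + w₂ v) f = coeffPairing w₁ f + coeffPairing w₂ f := by
  induction f using induction_linear with
  | zero => simp
  | add f g hf hg => rw [map_add, map_add, map_add, hf, hg, add_add_add_comm]
  | single v c => simp [mul_add]

lemma coeffPairing_mul_single_one [Add G] (w : G → k) (f : k[G]) (u : G) :
    coeffPairing w (f * single u 1) = coeffPairing (fun v => w (v + u)) f := by
  induction f using induction_linear with
  | zero => simp
  | add f g hf hg => rw [add_mul, map_add, map_add, hf, hg]
  | single v c => simp

lemma coeffPairing_mul_one_add_single [AddMonoid G] (w : G → k) (f : k[G]) (u : G) :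
    coeffPairing w (f * (1 + single u 1)) = coeffPairing (fun v => w v + w (v + u)) f := by
  rw [mul_one_add, map_add, coeffPairing_mul_single_one, coeffPairing_add_weight]

lemma coeffPairing_domCongr [AddMonoid G] {H : Type*} [AddMonoid H] (e : G ≃+ H) (w : H → k)
    (f : k[G]) : coeffPairing w (domCongr k k e f) = coeffPairing (fun v => w (e v)) f := by
  induction f using induction_linear with
  | zero => simp
  | add f g hf hg => rw [map_add, map_add, map_add, hf, hg]
  | single v c => simp

end AddMonoidAlgebra

def triangle (n : ℤ) : ℤ := n * (n + 1) / 2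

lemma two_mul_triangle (n : ℤ) : 2 * triangle n = n * (n + 1) :=
  Int.mul_ediv_cancel' (Int.even_mul_succ_self n).two_dvd

lemma triangle_add_one (n : ℤ) : triangle (n + 1) = triangle n + (n + 1) := by
  linarith [two_mul_triangle n, two_mul_triangle (n + 1)]

lemma triangle_neg (n : ℤ) : triangle (-n) = triangle n - n := by
  linarith [two_mul_triangle n, two_mul_triangle (-n)]

lemma cast_triangle_add_cast_triangle_add_one (n : ℤ) :
    (triangle n : ZMod 2) + triangle (n + 1) = ((n + 1 : ℤ) : ZMod 2) := by
  rw [triangle_add_one, Int.cast_add (triangle n), ← add_assoc, CharTwo.add_self_eq_zero,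
    zero_add]

lemma coeffPairing_bar (w : ℤ × ℤ → ZMod 2) (f : R2) :
    coeffPairing w (bar f) = coeffPairing (fun v => w (-v)) f :=
  coeffPairing_domCongr _ _ _

lemma coeffPairing_fst_bar (f : R2) :
    coeffPairing (fun v => (v.1 : ZMod 2)) (bar f) = coeffPairing (fun v => (v.1 : ZMod 2)) f := by
  simp [coeffPairing_bar, CharTwo.neg_eq]

lemma coeffPairing_snd_eq_zero_of_bar_eq {f : R2} (hf : bar f = f) :
    coeffPairing (fun v => (v.2 : ZMod 2)) f = 0 := by
  have h := congrArg (coeffPairing fun v => (triangle v.2 : ZMod 2)) hf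
  simp only [coeffPairing_bar, Prod.snd_neg, triangle_neg, Int.cast_sub, CharTwo.sub_eq_add,
    coeffPairing_add_weight] at h
  simpa using h

lemma coeffPairing_fst_of_second_row_eq {p r : R2} {a b : ℤ}
    (h : p * (1 + mono (-1) 0) + r * (1 + mono 0 (-1)) = mono (-a) (-b) * (1 + mono 1 0)) :
    coeffPairing (fun v => (v.1 : ZMod 2)) p = 1 + a := by
  have hp (n : ℤ) : (triangle n : ZMod 2) + triangle (n + -1) = n := by
    simpa [add_comm] using cast_triangle_add_cast_triangle_add_one (n + -1)
  have h := congrArg (coeffPairing fun v => (triangle v.1 : ZMod 2)) h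
  simp only [mono, map_add, coeffPairing_mul_one_add_single, Prod.fst_add, add_zero, hp,
    CharTwo.add_self_eq_zero, coeffPairing_zero, coeffPairing_single, one_mul,
    cast_triangle_add_cast_triangle_add_one] at h
  rw [h]
  push_cast; ring_nf; reduce_mod_char

lemma coeffPairing_snd_add_coeffPairing_fst_of_first_row_eq {p r : R2} {a b : ℤ}
    (h : p * (1 + mono (-1) 0) + r * (1 + mono 0 (-1)) = mono (-a) (-b) * (1 + mono 0 1)) :
    coeffPairing (fun v => (v.2 : ZMod 2)) p + coeffPairing (fun v => (v.1 : ZMod 2)) r = a := by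
  have hp (m n : ℤ) : ((m * n : ℤ) : ZMod 2) + ((m + -1) * n : ℤ) = n := by
    push_cast; ring_nf; reduce_mod_char
  have hr (m n : ℤ) : ((m * n : ℤ) : ZMod 2) + (m * (n + -1) : ℤ) = m := by
    push_cast; ring_nf; reduce_mod_char
  have h := congrArg (coeffPairing fun v => ((v.1 * v.2 : ℤ) : ZMod 2)) h
  simp only [mono, map_add, coeffPairing_mul_one_add_single, Prod.fst_add, Prod.snd_add, add_zero,
    hp, hr, coeffPairing_single, one_mul] at h
  rw [h]
  push_cast; ring_nf; reduce_mod_char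

/-- No Hermitian (`C = C†`) solution of `C·d = d̃·u⁻¹` exists, for any monomial `u = x^a y^b`. -/
theorem no_hermitian_C (a b : ℤ) :
    ¬ ∃ C : Matrix (Fin 2) (Fin 2) R2,
        C = dag C ∧ C * dcol = mono (-a) (-b) • dtcol := by
  rintro ⟨C, hC, hCd⟩
  have row₀ : C 0 0 * (1 + mono (-1) 0) + C 0 1 * (1 + mono 0 (-1))
      = mono (-a) (-b) * (1 + mono 0 1) := by
    simpa [Matrix.mul_apply, dcol, dtcol] using congrFun (congrFun hCd 0) 0
  have row₁ : C 1 0 * (1 + mono (-1) 0) + C 1 1 * (1 + mono 0 (-1))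
      = mono (-a) (-b) * (1 + mono 1 0) := by
    simpa [Matrix.mul_apply, dcol, dtcol] using congrFun (congrFun hCd 1) 0
  have h₀₀ : bar (C 0 0) = C 0 0 := by simpa [dag] using (congrFun (congrFun hC 0) 0).symm
  have h₁₀ : bar (C 1 0) = C 0 1 := by simpa [dag] using (congrFun (congrFun hC 0) 1).symm
  have key := coeffPairing_snd_add_coeffPairing_fst_of_first_row_eq row₀
  rw [coeffPairing_snd_eq_zero_of_bar_eq h₀₀, ← h₁₀, coeffPairing_fst_bar,
    coeffPairing_fst_of_second_row_eq row₁, zero_add] at key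
  exact one_ne_zero (by linear_combination key)
end
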